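/- Let X be a complete median space of finite rank and let C₁, C₂ be nonempty closed convex subsets of X such that no halfspace of X is transverse to both C₁ and C₂. Then the image π_{C₁}(C₂) is a single point c₁ and π_{C₂}(C₁) is a single point c₂, and for all x, y ∈ Conv(C₁ ∪ C₂), a halfspace h of X separates x from y (one of x,y lies in h and the other in hᶜ) if and only if exactly one of the following holds: h separates π_{C₁}(x) from π_{C₁}(y); h separates π_{C₂}(x) from π_{C₂}(y); h separates π_{[c₁,c₂]}(x) from π_{[c₁,c₂]}(y). -/

import Mathlib

/-- The interval `[a,b]` in a metric space: points `x` with `d(a,x) + d(x,b) = d(a,b)`. -/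
def mInterval {X : Type*} [MetricSpace X] (a b : X) : Set X :=
  {x : X | dist a x + dist x b = dist a b}

/-- A median space: every triple of points has a unique median point. -/
def IsMedianSpace (X : Type*) [MetricSpace X] : Prop :=
  ∀ a b c : X, ∃! m : X,
    m ∈ mInterval a b ∩ mInterval b c ∩ mInterval a c

/-- A subset is (median) convex if it contains the interval between any two of its points. -/
def MConvex {X : Type*} [MetricSpace X] (C : Set X) : Prop :=
  ∀ a ∈ C, ∀ b ∈ C, mInterval a b ⊆ C

/-- A halfspace: a convex subset with convex complement. -/
def IsHalfspace {X : Type*} [MetricSpace X] (h : Set X) : Prop :=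
  MConvex h ∧ MConvex hᶜ

/-- Two subsets are transverse if the four pairwise intersections of them and
their complements are all nonempty. -/
def TransverseSets {X : Type*} (h₁ h₂ : Set X) : Prop :=
  (h₁ ∩ h₂).Nonempty ∧ (h₁ᶜ ∩ h₂).Nonempty ∧ (h₁ ∩ h₂ᶜ).Nonempty ∧ (h₁ᶜ ∩ h₂ᶜ).Nonempty

/-- `X` has rank `n`: there are `n` pairwise transverse halfspaces but not `n+1`. -/
def HasMedianRank (X : Type*) [MetricSpace X] (n : ℕ) : Prop :=
  (∃ h : Fin n → Set X, (∀ i, IsHalfspace (h i)) ∧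
    ∀ i j, i ≠ j → TransverseSets (h i) (h j)) ∧
  ¬ ∃ h : Fin (n + 1) → Set X, (∀ i, IsHalfspace (h i)) ∧
    ∀ i j, i ≠ j → TransverseSets (h i) (h j)

/-- Median convex hull: intersection of all convex subsets containing `A`. -/
def mConvexHull {X : Type*} [MetricSpace X] (A : Set X) : Set X :=
  ⋂₀ {C : Set X | MConvex C ∧ A ⊆ C}

/-- The hyperplane bounding a halfspace `h`. -/
def mHyperplane {X : Type*} [MetricSpace X] (h : Set X) : Set X :=
  closure h ∩ closure hᶜ

/-- Depth of the halfspace `h` in the subset `A`: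
`sup { d(x, ĥ) | x ∈ h ∩ A }`. -/
noncomputable def mDepth {X : Type*} [MetricSpace X] (A h : Set X) : ℝ :=
  sSup ((fun x => Metric.infDist x (mHyperplane h)) '' (h ∩ A))

/-- `π` is the nearest-point projection onto `C`. -/
def IsNearestPointProj {X : Type*} [MetricSpace X] (C : Set X) (π : X → X) : Prop :=
  ∀ x : X, π x ∈ C ∧ dist x (π x) = Metric.infDist x C

/-- The halfspace `h` separates the points `x` and `y`. -/
def SeparatesPts {X : Type*} (h : Set X) (x y : X) : Prop :=
  (x ∈ h ∧ y ∈ hᶜ) ∨ (y ∈ h ∧ x ∈ hᶜ)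


/-!
Nearest-point projections onto convex sets of a median space are gates: `π_C x ∈ [c, x]` for
every `c ∈ C`. Consequently a halfspace separating `x` from `y` separates `π_C x` from `π_C y`
exactly when it is transverse to `C`, and conversely every halfspace separating `π_C x` from
`π_C y` separates `x` from `y`. Distinct points of a median space are separated by a halfspace
(a maximal convex set containing one and avoiding the other, by Zorn). If two points of `C₂`
had distinct projections to `C₁`, such a halfspace would be transverse to both `C₁` and `C₂`;
hence `π_{C₁}` is constant on `C₂`, and symmetrically. Finally, a halfspace separating two points
of `Conv(C₁ ∪ C₂)` cannot contain both `C₁` and `C₂` on one side, so it is transverse to exactly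
one of `C₁`, `C₂` and `[c₁, c₂]`.
-/

section Sets

variable {X : Type*} {h C : Set X} {x y : X}

def IsTransverseTo (h C : Set X) : Prop :=
  (h ∩ C).Nonempty ∧ (hᶜ ∩ C).Nonempty

theorem not_isTransverseTo_iff : ¬ IsTransverseTo h C ↔ C ⊆ h ∨ C ⊆ hᶜ := by
  constructor
  · intro hT
    by_contra! hC
    obtain ⟨⟨a, haC, hah⟩, ⟨b, hbC, hbh⟩⟩ := And.imp Set.not_subset.1 Set.not_subset.1 hC
    exact hT ⟨⟨b, not_not.1 hbh, hbC⟩, ⟨a, hah, haC⟩⟩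
  · rintro (hC | hC) ⟨⟨a, hah, haC⟩, ⟨b, hbh, hbC⟩⟩
    exacts [hbh (hC hbC), hC haC hah]

theorem separatesPts_iff : SeparatesPts h x y ↔ (x ∈ h ↔ y ∉ h) := by
  simp only [SeparatesPts, Set.mem_compl_iff]
  tauto

end Sets

section MetricMedian

variable {X : Type*} [MetricSpace X]

section Interval

variable {a b w x y z : X}

theorem mem_mInterval : x ∈ mInterval a b ↔ dist a x + dist x b = dist a b := Iff.rfl

theorem left_mem_mInterval (a b : X) : a ∈ mInterval a b := by simp [mInterval]

theorem right_mem_mInterval (a b : X) : b ∈ mInterval a b := by simp [mInterval]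

theorem mInterval_comm (a b : X) : mInterval a b = mInterval b a := by
  ext x
  rw [mem_mInterval, mem_mInterval, dist_comm b x, dist_comm x a, dist_comm b a, add_comm]

theorem mem_mInterval_symm (h : x ∈ mInterval a b) : x ∈ mInterval b a :=
  mInterval_comm a b ▸ h

theorem eq_of_mem_mInterval_self (h : x ∈ mInterval a a) : x = a := by
  rw [mem_mInterval, dist_self] at h
  exact dist_eq_zero.mp (by linarith [dist_nonneg (x := a) (y := x), dist_nonneg (x := x) (y := a)])

theorem mem_mInterval_trans_left (h₁ : y ∈ mInterval w z) (h₂ : x ∈ mInterval w y) :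
    x ∈ mInterval w z := by
  rw [mem_mInterval] at *
  linarith [dist_triangle x y z, dist_triangle w x z]

theorem mem_mInterval_trans_left_right (h₁ : y ∈ mInterval w z) (h₂ : x ∈ mInterval w y) :
    y ∈ mInterval x z := by
  have h₃ := mem_mInterval_trans_left h₁ h₂
  rw [mem_mInterval] at *
  linarith [dist_triangle x y z]

theorem mem_mInterval_trans_right (h₁ : x ∈ mInterval w z) (h₂ : y ∈ mInterval x z) :
    y ∈ mInterval w z :=
  mem_mInterval_symm (mem_mInterval_trans_left (mem_mInterval_symm h₁) (mem_mInterval_symm h₂))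

theorem mem_mInterval_trans_right_left (h₁ : x ∈ mInterval w z) (h₂ : y ∈ mInterval x z) :
    x ∈ mInterval w y :=
  mem_mInterval_symm
    (mem_mInterval_trans_left_right (mem_mInterval_symm h₁) (mem_mInterval_symm h₂))

end Interval

section Median

noncomputable def mMedian (hm : IsMedianSpace X) (a b c : X) : X :=
  (hm a b c).exists.choose

variable {a b c k t u v w x z z₁ z₂ : X}

theorem mMedian_mem_mInterval₁₂ (hm : IsMedianSpace X) (a b c : X) :
    mMedian hm a b c ∈ mInterval a b :=
  (hm a b c).exists.choose_spec.1.1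

theorem mMedian_mem_mInterval₂₃ (hm : IsMedianSpace X) (a b c : X) :
    mMedian hm a b c ∈ mInterval b c :=
  (hm a b c).exists.choose_spec.1.2

theorem mMedian_mem_mInterval₁₃ (hm : IsMedianSpace X) (a b c : X) :
    mMedian hm a b c ∈ mInterval a c :=
  (hm a b c).exists.choose_spec.2

theorem eq_mMedian (hm : IsMedianSpace X) (h₁₂ : z ∈ mInterval a b) (h₂₃ : z ∈ mInterval b c)
    (h₁₃ : z ∈ mInterval a c) : z = mMedian hm a b c :=
  (hm a b c).unique ⟨⟨h₁₂, h₂₃⟩, h₁₃⟩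
    ⟨⟨mMedian_mem_mInterval₁₂ hm a b c, mMedian_mem_mInterval₂₃ hm a b c⟩,
      mMedian_mem_mInterval₁₃ hm a b c⟩

theorem mMedian_comm₂₃ (hm : IsMedianSpace X) (a b c : X) : mMedian hm a b c = mMedian hm a c b :=
  (eq_mMedian hm (mMedian_mem_mInterval₁₃ hm a c b)
    (mem_mInterval_symm (mMedian_mem_mInterval₂₃ hm a c b)) (mMedian_mem_mInterval₁₂ hm a c b)).symm

theorem mMedian_rotate (hm : IsMedianSpace X) (a b c : X) : mMedian hm a b c = mMedian hm b c a :=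
  (eq_mMedian hm (mem_mInterval_symm (mMedian_mem_mInterval₁₃ hm b c a))
    (mMedian_mem_mInterval₁₂ hm b c a)
    (mem_mInterval_symm (mMedian_mem_mInterval₂₃ hm b c a))).symm

theorem exists_mem_mInterval_of_mem_mInterval (hm : IsMedianSpace X) (hu : u ∈ mInterval a b)
    (hk : k ∈ mInterval u v) :
    ∃ u', u' ∈ mInterval a k ∧ u' ∈ mInterval a b ∧ u' ∈ mInterval k u ∧
      k ∈ mInterval u' v :=
  ⟨mMedian hm a k u, mMedian_mem_mInterval₁₂ hm a k u,
    mem_mInterval_trans_left hu (mMedian_mem_mInterval₁₃ hm a k u),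
    mMedian_mem_mInterval₂₃ hm a k u,
    mem_mInterval_symm (mem_mInterval_trans_right_left (mem_mInterval_symm hk)
      (mMedian_mem_mInterval₂₃ hm a k u))⟩

/-- Pushing the endpoints of `[u, v] ∋ k` first towards `a`, then towards `b`, ends with both at
the median of `k, a, b`, which therefore equals `k`. -/
theorem mConvex_mInterval (hm : IsMedianSpace X) (a b : X) : MConvex (mInterval a b) := by
  intro u hu v hv k hk
  obtain ⟨u₁, hu₁k, hu₁, -, hk₁⟩ := exists_mem_mInterval_of_mem_mInterval hm hu hk
  obtain ⟨v₁, hv₁k, hv₁, -, hk₂⟩ :=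
    exists_mem_mInterval_of_mem_mInterval hm hv (mem_mInterval_symm hk₁)
  obtain ⟨u₂, hu₂k, hu₂, hu₂u₁, hk₃⟩ := exists_mem_mInterval_of_mem_mInterval hm
    (mem_mInterval_symm hu₁) (mem_mInterval_symm hk₂)
  obtain ⟨v₂, hv₂k, hv₂, hv₂v₁, hk₄⟩ := exists_mem_mInterval_of_mem_mInterval hm
    (mem_mInterval_symm hv₁) (mem_mInterval_symm hk₃)
  have hu₂m : u₂ = mMedian hm k a b :=
    eq_mMedian hm (mem_mInterval_trans_left (mem_mInterval_symm hu₁k) hu₂u₁)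
      (mem_mInterval_symm hu₂) (mem_mInterval_symm hu₂k)
  have hv₂m : v₂ = mMedian hm k a b :=
    eq_mMedian hm (mem_mInterval_trans_left (mem_mInterval_symm hv₁k) hv₂v₁)
      (mem_mInterval_symm hv₂) (mem_mInterval_symm hv₂k)
  rw [hu₂m, hv₂m] at hk₄
  rw [eq_of_mem_mInterval_self hk₄]
  exact mMedian_mem_mInterval₂₃ hm k a b

/-- With `m` the median of `c, p, x`, minimality of `p` forces `m = p`. -/
theorem mem_mInterval_of_forall_dist_le (hm : IsMedianSpace X) {C : Set X} {p : X}
    (hC : MConvex C) (hp : p ∈ C) (hmin : ∀ c ∈ C, dist x p ≤ dist x c) (hc : c ∈ C) :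
    p ∈ mInterval c x := by
  have hmC := hC c hc p hp (mMedian_mem_mInterval₁₂ hm c p x)
  have hmpx := mMedian_mem_mInterval₂₃ hm c p x
  rw [mem_mInterval] at hmpx
  have hmp : mMedian hm c p x = p := dist_le_zero.mp <| by
    linarith [hmin _ hmC, dist_comm x p, dist_comm x (mMedian hm c p x),
      dist_comm p (mMedian hm c p x)]
  exact hmp ▸ mMedian_mem_mInterval₁₃ hm c p x

theorem dist_mMedian_le (hm : IsMedianSpace X) (a : X) (hx : x ∈ mInterval b c) :
    dist a (mMedian hm a b c) ≤ dist a x := by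
  have h₁₂ := mMedian_mem_mInterval₁₂ hm a b c
  have h₂₃ := mMedian_mem_mInterval₂₃ hm a b c
  have h₁₃ := mMedian_mem_mInterval₁₃ hm a b c
  rw [mem_mInterval] at h₁₂ h₂₃ h₁₃ hx
  linarith [dist_triangle a x b, dist_triangle a x c, dist_comm x b, dist_comm (mMedian hm a b c) b]

theorem mMedian_mem_mInterval_of_mem (hm : IsMedianSpace X) (a : X) (hw : w ∈ mInterval b c) :
    mMedian hm a b c ∈ mInterval w a :=
  mem_mInterval_of_forall_dist_le hm (mConvex_mInterval hm b c)
    (mMedian_mem_mInterval₂₃ hm a b c) (fun _ hx => dist_mMedian_le hm a hx) hw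

theorem mem_mInterval_mMedian (hm : IsMedianSpace X) (ht₁ : t ∈ mInterval a b)
    (ht₂ : t ∈ mInterval a c) :
    t ∈ mInterval a (mMedian hm a b c) := by
  have htbc : mMedian hm t b c = mMedian hm a b c :=
    eq_mMedian hm (mem_mInterval_trans_right ht₁ (mMedian_mem_mInterval₁₂ hm t b c))
      (mMedian_mem_mInterval₂₃ hm t b c)
      (mem_mInterval_trans_right ht₂ (mMedian_mem_mInterval₁₃ hm t b c))
  set m := mMedian hm a b c
  have hm_tb : m ∈ mInterval t b := htbc ▸ mMedian_mem_mInterval₁₂ hm t b c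
  set q := mMedian hm a t m
  have hqt : q = t :=
    (eq_mMedian hm (mMedian_mem_mInterval₁₂ hm a t m)
      (mem_mInterval_trans_left hm_tb (mMedian_mem_mInterval₂₃ hm a t m))
      (mem_mInterval_trans_left ht₁ (mMedian_mem_mInterval₁₂ hm a t m))).trans
    (eq_mMedian hm (right_mem_mInterval a t) (left_mem_mInterval t b) ht₁).symm
  exact hqt ▸ mMedian_mem_mInterval₁₃ hm a t m

theorem mem_mInterval_mMedian_of_mem_mInterval (hm : IsMedianSpace X) (hz₁ : z₁ ∈ mInterval b c)
    (hz : z ∈ mInterval z₁ z₂) : z ∈ mInterval b (mMedian hm c z₂ z) := by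
  set w := mMedian hm c z₂ z
  set κ := mMedian hm z b z₁
  have hzκ : z ∈ mInterval κ z₂ :=
    mem_mInterval_trans_left_right hz (mem_mInterval_symm (mMedian_mem_mInterval₁₃ hm z b z₁))
  have hzκw : z ∈ mInterval κ w :=
    mem_mInterval_trans_right_left hzκ (mem_mInterval_symm (mMedian_mem_mInterval₂₃ hm c z₂ z))
  have hγ : mMedian hm b c z ∈ mInterval b w :=
    mem_mInterval_symm (mMedian_mem_mInterval_of_mem hm b (mMedian_mem_mInterval₁₃ hm c z₂ z))
  have hκγ : κ ∈ mInterval b (mMedian hm b c z) := by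
    rw [mMedian_comm₂₃]
    exact mem_mInterval_mMedian hm (mem_mInterval_symm (mMedian_mem_mInterval₁₂ hm z b z₁))
      (mem_mInterval_trans_left hz₁ (mMedian_mem_mInterval₂₃ hm z b z₁))
  exact mem_mInterval_trans_right (mem_mInterval_trans_left hγ hκγ) hzκw

theorem MConvex.mConvex_join (hm : IsMedianSpace X) {C : Set X} (hC : MConvex C) (u : X) :
    MConvex {z | ∃ c ∈ C, z ∈ mInterval u c} := by
  rintro z₁ ⟨c₁, hc₁, hz₁⟩ z₂ ⟨c₂, hc₂, hz₂⟩ z hz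
  have hw := mem_mInterval_mMedian_of_mem_mInterval hm hz₂
    (mem_mInterval_symm (mMedian_mem_mInterval₁₂ hm c₁ z₂ z))
  exact ⟨_, hC c₂ hc₂ c₁ hc₁ (mMedian_mem_mInterval₁₂ hm _ _ _),
    mem_mInterval_trans_left hw (mem_mInterval_mMedian_of_mem_mInterval hm hz₁ hz)⟩

theorem mMedian_mem_mInterval_pasch (hm : IsMedianSpace X) (hx : x ∈ mInterval a b)
    (hy : v ∈ mInterval b c) :
    mMedian hm a b c ∈ mInterval a v ∧ mMedian hm a b c ∈ mInterval x c :=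
  ⟨mem_mInterval_symm (mMedian_mem_mInterval_of_mem hm a hy),
    mMedian_rotate hm a b c ▸ mMedian_rotate hm b c a ▸ mMedian_mem_mInterval_of_mem hm c hx⟩

end Median

section Separation

theorem mConvex_singleton (p : X) : MConvex {p} := by
  rintro a rfl b rfl x hx
  exact eq_of_mem_mInterval_self hx

theorem MConvex.sUnion_of_isChain {S : Set (Set X)} (hS : ∀ s ∈ S, MConvex s)
    (hchain : IsChain (· ⊆ ·) S) : MConvex (⋃₀ S) := by
  rintro a ⟨s, hs, has⟩ b ⟨t, ht, hbt⟩ x hx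
  rcases hchain.total hs ht with hst | hts
  · exact ⟨t, ht, hS t ht a (hst has) b hbt hx⟩
  · exact ⟨s, hs, hS s hs a has b (hts hbt) hx⟩

/-- If `u ∉ M`, the join of `u` and `M` is a strictly larger convex set, so it contains `q`. -/
theorem isHalfspace_of_maximal (hm : IsMedianSpace X) {M : Set X} {q : X}
    (hM : Maximal (fun C => MConvex C ∧ q ∉ C) M) (hne : M.Nonempty) : IsHalfspace M := by
  obtain ⟨⟨hMcv, hqM⟩, hmax⟩ := hM
  have hjoin : ∀ u ∉ M, ∃ c ∈ M, q ∈ mInterval u c := by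
    intro u hu
    by_contra! hq
    obtain ⟨p, hp⟩ := hne
    have hMJ : M ⊆ {z | ∃ c ∈ M, z ∈ mInterval u c} :=
      fun c hc => ⟨c, hc, right_mem_mInterval u c⟩
    exact hu (hmax ⟨hMcv.mConvex_join hm u, fun ⟨c, hc, hqc⟩ => hq c hc hqc⟩ hMJ
      ⟨p, hp, left_mem_mInterval u p⟩)
  refine ⟨hMcv, fun u hu v hv z hz hzM => ?_⟩
  obtain ⟨cu, hcu, hqu⟩ := hjoin u hu
  obtain ⟨cv, hcv, hqv⟩ := hjoin v hv
  obtain ⟨htu, htz⟩ := mMedian_mem_mInterval_pasch hm hz hqv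
  exact hqM (hMcv _ (hMcv z hzM cv hcv htz) cu hcu (mem_mInterval_trans_left_right hqu htu))

theorem exists_isHalfspace_mem_not_mem (hm : IsMedianSpace X) {p q : X} (hpq : p ≠ q) :
    ∃ h : Set X, IsHalfspace h ∧ p ∈ h ∧ q ∉ h := by
  obtain ⟨M, hpM, hM⟩ := zorn_subset_nonempty {C : Set X | MConvex C ∧ q ∉ C}
    (fun S hS hchain _ => ⟨⋃₀ S,
      ⟨MConvex.sUnion_of_isChain (fun s hs => (hS hs).1) hchain, fun ⟨t, ht, hqt⟩ => (hS ht).2 hqt⟩,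
      fun _ => Set.subset_sUnion_of_mem⟩)
    {p} ⟨mConvex_singleton p, fun h => hpq (Set.mem_singleton_iff.mp h).symm⟩
  exact ⟨M, isHalfspace_of_maximal hm hM ⟨p, hpM rfl⟩, hpM rfl, hM.prop.2⟩

end Separation

section Gate

variable {C D K h : Set X} {π : X → X} {c p x y : X}

def IsGate (C : Set X) (π : X → X) : Prop :=
  ∀ x, π x ∈ C ∧ ∀ c ∈ C, π x ∈ mInterval c x

theorem IsHalfspace.compl (hh : IsHalfspace h) : IsHalfspace hᶜ :=
  ⟨hh.2, (compl_compl h).symm ▸ hh.1⟩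

theorem mConvexHull_subset {A : Set X} (hK : MConvex K) (hA : A ⊆ K) : mConvexHull A ⊆ K :=
  Set.sInter_subset_of_mem ⟨hK, hA⟩

theorem IsNearestPointProj.isGate (hm : IsMedianSpace X) (hπ : IsNearestPointProj C π)
    (hC : MConvex C) : IsGate C π := fun x =>
  ⟨(hπ x).1, fun _ hc => mem_mInterval_of_forall_dist_le hm hC (hπ x).1
    (fun _ hc' => (hπ x).2 ▸ Metric.infDist_le_dist_of_mem hc') hc⟩

namespace IsGate

theorem mem_of_mem (hg : IsGate C π) (hK : MConvex K) (hc : c ∈ K) (hcC : c ∈ C) (hx : x ∈ K) :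
    π x ∈ K :=
  hK c hc x hx ((hg x).2 c hcC)

theorem mem_of_proj_mem (hg : IsGate C π) (hh : IsHalfspace h) (hx : π x ∈ h) (hy : π y ∉ h) :
    x ∈ h := by
  by_contra hxh
  exact hg.mem_of_mem hh.2 hy (hg y).1 hxh hx

theorem separatesPts_of_separatesPts_proj (hg : IsGate C π) (hh : IsHalfspace h)
    (hs : SeparatesPts h (π x) (π y)) : SeparatesPts h x y := by
  rcases hs with ⟨hx, hy⟩ | ⟨hy, hx⟩
  · exact Or.inl ⟨hg.mem_of_proj_mem hh hx hy, hg.mem_of_proj_mem hh.compl hy (not_not.2 hx)⟩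
  · exact Or.inr ⟨hg.mem_of_proj_mem hh hy hx, hg.mem_of_proj_mem hh.compl hx (not_not.2 hy)⟩

theorem separatesPts_proj_iff (hg : IsGate C π) (hh : IsHalfspace h) (hxy : SeparatesPts h x y) :
    SeparatesPts h (π x) (π y) ↔ IsTransverseTo h C := by
  constructor
  · rintro (⟨hx, hy⟩ | ⟨hy, hx⟩)
    exacts [⟨⟨_, hx, (hg x).1⟩, ⟨_, hy, (hg y).1⟩⟩, ⟨⟨_, hy, (hg y).1⟩, ⟨_, hx, (hg x).1⟩⟩]
  · rintro ⟨⟨c, hch, hcC⟩, ⟨d, hdh, hdC⟩⟩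
    rcases hxy with ⟨hx, hy⟩ | ⟨hy, hx⟩
    exacts [Or.inl ⟨hg.mem_of_mem hh.1 hch hcC hx, hg.mem_of_mem hh.2 hdh hdC hy⟩,
      Or.inr ⟨hg.mem_of_mem hh.1 hch hcC hy, hg.mem_of_mem hh.2 hdh hdC hx⟩]

theorem image_eq_singleton (hg : IsGate C π) (hm : IsMedianSpace X)
    (hns : ∀ h, IsHalfspace h → IsTransverseTo h C → ¬ IsTransverseTo h D) (hp : p ∈ D) :
    π '' D = {π p} := by
  refine Set.eq_singleton_iff_unique_mem.2 ⟨⟨p, hp, rfl⟩, ?_⟩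
  rintro _ ⟨a, ha, rfl⟩
  by_contra hne
  obtain ⟨h, hh, hah, hph⟩ := exists_isHalfspace_mem_not_mem hm hne
  exact hns h hh ⟨⟨_, hah, (hg a).1⟩, ⟨_, hph, (hg p).1⟩⟩
    ⟨⟨a, hg.mem_of_proj_mem hh hah hph, ha⟩,
      ⟨p, hg.mem_of_proj_mem hh.compl hph (not_not.2 hah), hp⟩⟩

theorem not_isTransverseTo_mInterval (hg : IsGate C π) (hh : IsHalfspace h) (hp : p ∈ D)
    (hc : c ∈ D) (hC : IsTransverseTo h C) (hD : ¬ IsTransverseTo h D) :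
    ¬ IsTransverseTo h (mInterval (π p) c) := by
  obtain ⟨⟨a, hah, haC⟩, ⟨b, hbh, hbC⟩⟩ := hC
  rw [not_isTransverseTo_iff]
  rcases not_isTransverseTo_iff.1 hD with hD | hD
  · exact Or.inl (hh.1 _ (hg.mem_of_mem hh.1 hah haC (hD hp)) c (hD hc))
  · exact Or.inr (hh.2 _ (hg.mem_of_mem hh.2 hbh hbC (hD hp)) c (hD hc))

end IsGate

theorem isTransverseTo_mInterval_of_separatesPts {c₁ c₂ : X} (hh : IsHalfspace h)
    (hc₁ : c₁ ∈ C) (hc₂ : c₂ ∈ D) (hC : ¬ IsTransverseTo h C) (hD : ¬ IsTransverseTo h D)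
    (hx : x ∈ mConvexHull (C ∪ D)) (hy : y ∈ mConvexHull (C ∪ D)) (hxy : SeparatesPts h x y) :
    IsTransverseTo h (mInterval c₁ c₂) := by
  rw [separatesPts_iff] at hxy
  have hull {K : Set X} (hK : MConvex K) (hCK : C ⊆ K) (hDK : D ⊆ K) : mConvexHull (C ∪ D) ⊆ K :=
    mConvexHull_subset hK (Set.union_subset hCK hDK)
  rcases not_isTransverseTo_iff.1 hC with hC | hC <;>
    rcases not_isTransverseTo_iff.1 hD with hD | hD
  · exact absurd (hull hh.1 hC hD hy) (hxy.1 (hull hh.1 hC hD hx))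
  · exact ⟨⟨c₁, hC hc₁, left_mem_mInterval c₁ c₂⟩, ⟨c₂, hD hc₂, right_mem_mInterval c₁ c₂⟩⟩
  · exact ⟨⟨c₂, hD hc₂, right_mem_mInterval c₁ c₂⟩, ⟨c₁, hC hc₁, left_mem_mInterval c₁ c₂⟩⟩
  · exact (hull hh.2 hC hD hx (hxy.2 (hull hh.2 hC hD hy))).elim

theorem exactly_one_isTransverseTo {π₁ π₂ : X → X} {p₁ p₂ : X}
    (hg₁ : IsGate C π₁) (hg₂ : IsGate D π₂)
    (hns : ∀ h, IsHalfspace h → IsTransverseTo h C → ¬ IsTransverseTo h D)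
    (hp₁ : p₁ ∈ C) (hp₂ : p₂ ∈ D) (hh : IsHalfspace h)
    (hx : x ∈ mConvexHull (C ∪ D)) (hy : y ∈ mConvexHull (C ∪ D)) (hxy : SeparatesPts h x y) :
    let I := mInterval (π₁ p₂) (π₂ p₁)
    (IsTransverseTo h C ∧ ¬ IsTransverseTo h D ∧ ¬ IsTransverseTo h I) ∨
      (¬ IsTransverseTo h C ∧ IsTransverseTo h D ∧ ¬ IsTransverseTo h I) ∨
      (¬ IsTransverseTo h C ∧ ¬ IsTransverseTo h D ∧ IsTransverseTo h I) := by
  intro I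
  by_cases hC : IsTransverseTo h C
  · exact Or.inl ⟨hC, hns h hh hC,
      hg₁.not_isTransverseTo_mInterval hh hp₂ (hg₂ p₁).1 hC (hns h hh hC)⟩
  by_cases hD : IsTransverseTo h D
  · refine Or.inr (Or.inl ⟨hC, hD, ?_⟩)
    rw [show I = mInterval (π₂ p₁) (π₁ p₂) from mInterval_comm _ _]
    exact hg₂.not_isTransverseTo_mInterval hh hp₁ (hg₁ p₂).1 hD hC
  · exact Or.inr (Or.inr ⟨hC, hD,
      isTransverseTo_mInterval_of_separatesPts hh (hg₁ p₂).1 (hg₂ p₁).1 hC hD hx hy hxy⟩)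

end Gate

end MetricMedian

theorem statement6_general (X : Type*) [MetricSpace X]
    (hmed : IsMedianSpace X)
    (C₁ C₂ : Set X) (h₁ne : C₁.Nonempty) (h₂ne : C₂.Nonempty)
    (h₁cv : MConvex C₁) (h₂cv : MConvex C₂)
    (hns : ¬ ∃ h : Set X, IsHalfspace h ∧
      (h ∩ C₁).Nonempty ∧ (hᶜ ∩ C₁).Nonempty ∧ (h ∩ C₂).Nonempty ∧ (hᶜ ∩ C₂).Nonempty)
    (π₁ π₂ : X → X) (hπ₁ : IsNearestPointProj C₁ π₁) (hπ₂ : IsNearestPointProj C₂ π₂) :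
    ∃ c₁ c₂ : X, π₁ '' C₂ = {c₁} ∧ π₂ '' C₁ = {c₂} ∧
      ∀ π₀ : X → X, IsNearestPointProj (mInterval c₁ c₂) π₀ →
      ∀ x ∈ mConvexHull (C₁ ∪ C₂), ∀ y ∈ mConvexHull (C₁ ∪ C₂),
      ∀ h : Set X, IsHalfspace h →
        (SeparatesPts h x y ↔
          ((SeparatesPts h (π₁ x) (π₁ y) ∧ ¬ SeparatesPts h (π₂ x) (π₂ y) ∧
              ¬ SeparatesPts h (π₀ x) (π₀ y)) ∨
           (¬ SeparatesPts h (π₁ x) (π₁ y) ∧ SeparatesPts h (π₂ x) (π₂ y) ∧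
              ¬ SeparatesPts h (π₀ x) (π₀ y)) ∨
           (¬ SeparatesPts h (π₁ x) (π₁ y) ∧ ¬ SeparatesPts h (π₂ x) (π₂ y) ∧
              SeparatesPts h (π₀ x) (π₀ y)))) := by
  have hg₁ := hπ₁.isGate hmed h₁cv
  have hg₂ := hπ₂.isGate hmed h₂cv
  have hns' (h : Set X) (hh : IsHalfspace h) (h₁ : IsTransverseTo h C₁) :
      ¬ IsTransverseTo h C₂ := fun h₂ => hns ⟨h, hh, h₁.1, h₁.2, h₂.1, h₂.2⟩
  obtain ⟨p₁, hp₁⟩ := h₁ne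
  obtain ⟨p₂, hp₂⟩ := h₂ne
  refine ⟨π₁ p₂, π₂ p₁, hg₁.image_eq_singleton hmed hns' hp₂,
    hg₂.image_eq_singleton hmed (fun h hh h₂ h₁ => hns' h hh h₁ h₂) hp₁, ?_⟩
  intro π₀ hπ₀ x hx y hy h hh
  have hg₀ := hπ₀.isGate hmed (mConvex_mInterval hmed _ _)
  constructor
  · intro hxy
    rw [hg₁.separatesPts_proj_iff hh hxy, hg₂.separatesPts_proj_iff hh hxy,
      hg₀.separatesPts_proj_iff hh hxy]
    exact exactly_one_isTransverseTo hg₁ hg₂ hns' hp₁ hp₂ hh hx hy hxy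
  · rintro (⟨hs, -, -⟩ | ⟨-, hs, -⟩ | ⟨-, -, hs⟩)
    exacts [hg₁.separatesPts_of_separatesPts_proj hh hs,
      hg₂.separatesPts_of_separatesPts_proj hh hs,
      hg₀.separatesPts_of_separatesPts_proj hh hs]

/-- If no halfspace is transverse to both closed convex sets `C₁`, `C₂`, then the
projections `π_{C₁}(C₂)` and `π_{C₂}(C₁)` are singletons `{c₁}`, `{c₂}`, and a halfspace
separates two points of `Conv(C₁ ∪ C₂)` iff it separates exactly one of the corresponding
pairs of projections to `C₁`, `C₂` or `[c₁,c₂]`. -/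
theorem statement6 (X : Type*) [MetricSpace X] [CompleteSpace X]
    (hmed : IsMedianSpace X) (hrank : ∃ n : ℕ, HasMedianRank X n)
    (C₁ C₂ : Set X) (h₁ne : C₁.Nonempty) (h₂ne : C₂.Nonempty)
    (h₁cl : IsClosed C₁) (h₂cl : IsClosed C₂) (h₁cv : MConvex C₁) (h₂cv : MConvex C₂)
    (hns : ¬ ∃ h : Set X, IsHalfspace h ∧
      (h ∩ C₁).Nonempty ∧ (hᶜ ∩ C₁).Nonempty ∧ (h ∩ C₂).Nonempty ∧ (hᶜ ∩ C₂).Nonempty)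
    (π₁ π₂ : X → X) (hπ₁ : IsNearestPointProj C₁ π₁) (hπ₂ : IsNearestPointProj C₂ π₂) :
    ∃ c₁ c₂ : X, π₁ '' C₂ = {c₁} ∧ π₂ '' C₁ = {c₂} ∧
      ∀ π₀ : X → X, IsNearestPointProj (mInterval c₁ c₂) π₀ →
      ∀ x ∈ mConvexHull (C₁ ∪ C₂), ∀ y ∈ mConvexHull (C₁ ∪ C₂),
      ∀ h : Set X, IsHalfspace h →
        (SeparatesPts h x y ↔
          ((SeparatesPts h (π₁ x) (π₁ y) ∧ ¬ SeparatesPts h (π₂ x) (π₂ y) ∧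
              ¬ SeparatesPts h (π₀ x) (π₀ y)) ∨
           (¬ SeparatesPts h (π₁ x) (π₁ y) ∧ SeparatesPts h (π₂ x) (π₂ y) ∧
              ¬ SeparatesPts h (π₀ x) (π₀ y)) ∨
           (¬ SeparatesPts h (π₁ x) (π₁ y) ∧ ¬ SeparatesPts h (π₂ x) (π₂ y) ∧
              SeparatesPts h (π₀ x) (π₀ y)))) :=
  statement6_general X hmed C₁ C₂ h₁ne h₂ne h₁cv h₂cv hns π₁ π₂ hπ₁ hπ₂
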